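/- Suppose the real 4×4 matrix R has Lorentz singular values s0 ≥ s1 ≥ s2 ≥ |s3|. Then the infimum over all pairs of proper orthochronous Lorentz matrices L1, L2 of Tr(L1 · R · L2ᵀ · diag(1,1,0,0)) (i.e., of the sum of the first two diagonal entries of L1 R L2ᵀ) equals s0 − s1, and this infimum is attained. -/

import Mathlib

open Matrix

noncomputable section

/-- The Minkowski metric η = diag(1,-1,-1,-1). -/
def η : Matrix (Fin 4) (Fin 4) ℝ := Matrix.diagonal ![1, -1, -1, -1]

/-- A proper orthochronous Lorentz matrix. -/
def LorentzPO (L : Matrix (Fin 4) (Fin 4) ℝ) : Prop :=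
  Lᵀ * η * L = η ∧ L.det = 1 ∧ 1 ≤ L 0 0

/-- `R` has Lorentz singular values `s 0 ≥ s 1 ≥ s 2 ≥ |s 3|`. -/
def HasLSV (R : Matrix (Fin 4) (Fin 4) ℝ) (s : Fin 4 → ℝ) : Prop :=
  s 1 ≤ s 0 ∧ s 2 ≤ s 1 ∧ |s 3| ≤ s 2 ∧
  ∃ L1 L2 : Matrix (Fin 4) (Fin 4) ℝ, LorentzPO L1 ∧ LorentzPO L2 ∧
    R = L1 * Matrix.diagonal s * L2ᵀ

lemma eta_sq : η * η = 1 := by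
  simp [η, Matrix.diagonal_mul_diagonal]
  ext i
  fin_cases i <;> norm_num

lemma eta_symm : ηᵀ = η := by simp [η]

lemma lor_flip {L : Matrix (Fin 4) (Fin 4) ℝ} (h : Lᵀ * η * L = η) :
    L * η * Lᵀ = η := by
  have h1 : (η * Lᵀ * η) * L = 1 := by
    calc (η * Lᵀ * η) * L = η * (Lᵀ * η * L) := by noncomm_ring
    _ = η * η := by rw [h]
    _ = 1 := eta_sq
  have h2 : L * (η * Lᵀ * η) = 1 := mul_eq_one_comm.mp h1
  calc L * η * Lᵀ = (L * (η * Lᵀ * η)) * η := by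
        rw [show (L * (η * Lᵀ * η)) * η = L * η * Lᵀ * (η * η) by noncomm_ring, eta_sq, mul_one]
  _ = η := by rw [h2, one_mul]

lemma colrel {M : Matrix (Fin 4) (Fin 4) ℝ} (h : Mᵀ * η * M = η) (i j : Fin 4) :
    M 0 i * M 0 j - M 1 i * M 1 j - M 2 i * M 2 j - M 3 i * M 3 j = η i j := by
  have h' := congrFun (congrFun h i) j
  rw [← h']
  simp [Matrix.mul_apply, η, Matrix.diagonal_apply, Fin.sum_univ_four]
  ring

lemma rowrel {M : Matrix (Fin 4) (Fin 4) ℝ} (h : Mᵀ * η * M = η) (i j : Fin 4) :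
    M i 0 * M j 0 - M i 1 * M j 1 - M i 2 * M j 2 - M i 3 * M j 3 = η i j := by
  have h2 : (Mᵀ)ᵀ * η * Mᵀ = η := by rw [Matrix.transpose_transpose]; exact lor_flip h
  simpa using colrel h2 i j

lemma key_cs (p q x1 x2 x3 u1 u2 u3 : ℝ) (hp : 1 ≤ p) (hq : 1 ≤ q)
    (hx : x1^2 + x2^2 + x3^2 = p^2 - 1) (hu : u1^2 + u2^2 + u3^2 = q^2 - 1) :
    1 ≤ p * q + (x1*u1 + x2*u2 + x3*u3) := by
  have hw : 0 ≤ p * q - 1 := by nlinarith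
  nlinarith [hw, sq_nonneg (x1*u2 - x2*u1), sq_nonneg (x1*u3 - x3*u1), sq_nonneg (x2*u3 - x3*u2),
    sq_nonneg (p - q)]

lemma key_p0 (p q m n : ℝ) (hp : 1 ≤ p) (hq : 1 ≤ q)
    (hm : m^2 ≤ p^2 - 1) (hn : n^2 ≤ q^2 - 1) : 1 ≤ p * q + m * n := by
  have hw : 0 ≤ p * q - 1 := by nlinarith
  nlinarith [hw, sq_nonneg (p - q), sq_nonneg (m - n), sq_nonneg (m + n)]

lemma key_b (k00 k01 k11 r s : ℝ) (h1 : 1 ≤ k00)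
    (hcol : k01^2 + 1 = k11^2 + r) (hr : 0 ≤ r)
    (hrow : k01^2 + s = k00^2 - 1) (hs : 0 ≤ s) : 0 ≤ k00 + k11 := by
  nlinarith [sq_nonneg (k00 + k11), sq_nonneg (k00 - k11)]

def Lor (L : Matrix (Fin 4) (Fin 4) ℝ) : Prop := Lᵀ * η * L = η ∧ 1 ≤ L 0 0

lemma lor_mul {M N : Matrix (Fin 4) (Fin 4) ℝ} (hM : Lor M) (hN : Lor N) : Lor (M * N) := by
  obtain ⟨hM1, hM2⟩ := hM
  obtain ⟨hN1, hN2⟩ := hN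
  constructor
  · rw [Matrix.transpose_mul]
    calc Nᵀ * Mᵀ * η * (M * N) = Nᵀ * (Mᵀ * η * M) * N := by noncomm_ring
    _ = Nᵀ * η * N := by rw [hM1]
    _ = η := hN1
  · have hrow := rowrel hM1 0 0
    have hcol := colrel hN1 0 0
    have e00 : η 0 0 = (1:ℝ) := by norm_num [η]
    rw [e00] at hrow hcol
    have hk := key_cs (M 0 0) (N 0 0) (M 0 1) (M 0 2) (M 0 3) (N 1 0) (N 2 0) (N 3 0)
      hM2 hN2 (by nlinarith) (by nlinarith)
    rw [Matrix.mul_apply, Fin.sum_univ_four]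
    linarith

lemma lor_transpose {N : Matrix (Fin 4) (Fin 4) ℝ} (hN : Lor N) : Lor Nᵀ := by
  refine ⟨?_, hN.2⟩
  rw [Matrix.transpose_transpose]
  exact lor_flip hN.1

lemma trace2 {K : Matrix (Fin 4) (Fin 4) ℝ} (hK : Lor K) : 0 ≤ K 0 0 + K 1 1 := by
  have hcol1 := colrel hK.1 1 1
  have hrow0 := rowrel hK.1 0 0
  have e11 : η 1 1 = (-1:ℝ) := by norm_num [η]
  have e00 : η 0 0 = (1:ℝ) := by norm_num [η]
  rw [e11] at hcol1
  rw [e00] at hrow0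
  exact key_b (K 0 0) (K 0 1) (K 1 1) (K 2 1^2 + K 3 1^2) (K 0 2^2 + K 0 3^2)
    hK.2 (by nlinarith) (by positivity) (by nlinarith) (by positivity)

lemma diag_lor (v : Fin 4 → ℝ) (hv : ∀ k, v k * v k = 1) :
    (Matrix.diagonal v)ᵀ * η * Matrix.diagonal v = η := by
  rw [Matrix.diagonal_transpose]
  simp only [η, Matrix.diagonal_mul_diagonal]
  have hfun : (fun i => v i * ![(1:ℝ),-1,-1,-1] i * v i) = ![(1:ℝ),-1,-1,-1] := by
    funext k
    calc v k * ![(1:ℝ),-1,-1,-1] k * v k = ![(1:ℝ),-1,-1,-1] k * (v k * v k) := by ring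
    _ = ![(1:ℝ),-1,-1,-1] k := by rw [hv k]; ring
  rw [hfun]

lemma lor_mul_diag {N : Matrix (Fin 4) (Fin 4) ℝ} (hN : Lor N) (v : Fin 4 → ℝ)
    (hv : ∀ k, v k * v k = 1) (hv0 : v 0 = 1) : Lor (N * Matrix.diagonal v) := by
  constructor
  · rw [Matrix.transpose_mul]
    calc (Matrix.diagonal v)ᵀ * Nᵀ * η * (N * Matrix.diagonal v)
        = (Matrix.diagonal v)ᵀ * (Nᵀ * η * N) * Matrix.diagonal v := by noncomm_ring
    _ = (Matrix.diagonal v)ᵀ * η * Matrix.diagonal v := by rw [hN.1]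
    _ = η := diag_lor v hv
  · rw [Matrix.mul_diagonal, hv0, mul_one]
    exact hN.2

lemma k_entry (M N : Matrix (Fin 4) (Fin 4) ℝ) (i : Fin 4) :
    (M * Nᵀ) i i = M i 0 * N i 0 + M i 1 * N i 1 + M i 2 * N i 2 + M i 3 * N i 3 := by
  simp [Matrix.mul_apply, Matrix.transpose_apply, Fin.sum_univ_four]

lemma kdiag_entry (M N : Matrix (Fin 4) (Fin 4) ℝ) (v : Fin 4 → ℝ) (i : Fin 4) :
    (M * (N * Matrix.diagonal v)ᵀ) i i =
      M i 0 * (N i 0 * v 0) + M i 1 * (N i 1 * v 1) + M i 2 * (N i 2 * v 2)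
        + M i 3 * (N i 3 * v 3) := by
  simp [Matrix.mul_apply, Matrix.transpose_apply, Matrix.mul_diagonal, Fin.sum_univ_four]
  ring

lemma main_ineq {M N : Matrix (Fin 4) (Fin 4) ℝ} (hM : Lor M) (hN : Lor N)
    (s : Fin 4 → ℝ) (h01 : s 1 ≤ s 0) (h12 : s 2 ≤ s 1) (h23 : |s 3| ≤ s 2) :
    s 0 - s 1 ≤ s 0 * (M 0 0 * N 0 0 + M 1 0 * N 1 0)
      + s 1 * (M 0 1 * N 0 1 + M 1 1 * N 1 1)
      + s 2 * (M 0 2 * N 0 2 + M 1 2 * N 1 2)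
      + s 3 * (M 0 3 * N 0 3 + M 1 3 * N 1 3) := by
  have hcM := colrel hM.1 0 0
  have hcN := colrel hN.1 0 0
  have e00 : η 0 0 = (1:ℝ) := by norm_num [η]
  rw [e00] at hcM hcN
  have hp0 : 1 ≤ M 0 0 * N 0 0 + M 1 0 * N 1 0 := by
    have := key_p0 (M 0 0) (N 0 0) (M 1 0) (N 1 0) hM.2 hN.2 (by nlinarith) (by nlinarith)
    linarith
  have hP3 : 0 ≤ (M 0 0 * N 0 0 + M 1 0 * N 1 0) + (M 0 1 * N 0 1 + M 1 1 * N 1 1)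
      + (M 0 2 * N 0 2 + M 1 2 * N 1 2) + (M 0 3 * N 0 3 + M 1 3 * N 1 3) := by
    have h := trace2 (lor_mul hM (lor_transpose hN))
    rw [k_entry, k_entry] at h
    linarith
  have hv2 : ∀ k, (![(1:ℝ),1,-1,-1]) k * (![(1:ℝ),1,-1,-1]) k = 1 := by
    intro k; fin_cases k <;> norm_num
  have hv3 : ∀ k, (![(1:ℝ),1,1,-1]) k * (![(1:ℝ),1,1,-1]) k = 1 := by
    intro k; fin_cases k <;> norm_num
  have hQ2 : 0 ≤ (M 0 0 * N 0 0 + M 1 0 * N 1 0) + (M 0 1 * N 0 1 + M 1 1 * N 1 1)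
      - (M 0 2 * N 0 2 + M 1 2 * N 1 2) - (M 0 3 * N 0 3 + M 1 3 * N 1 3) := by
    have h := trace2 (lor_mul hM (lor_transpose
      (lor_mul_diag hN (![(1:ℝ),1,-1,-1]) hv2 (by norm_num))))
    rw [kdiag_entry, kdiag_entry] at h
    norm_num [Matrix.cons_val_two, Matrix.cons_val_three] at h
    linarith
  have hQ3 : 0 ≤ (M 0 0 * N 0 0 + M 1 0 * N 1 0) + (M 0 1 * N 0 1 + M 1 1 * N 1 1)
      + (M 0 2 * N 0 2 + M 1 2 * N 1 2) - (M 0 3 * N 0 3 + M 1 3 * N 1 3) := by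
    have h := trace2 (lor_mul hM (lor_transpose
      (lor_mul_diag hN (![(1:ℝ),1,1,-1]) hv3 (by norm_num))))
    rw [kdiag_entry, kdiag_entry] at h
    norm_num [Matrix.cons_val_two, Matrix.cons_val_three] at h
    linarith
  obtain ⟨h3l, h3r⟩ := abs_le.mp h23
  have t0 : 0 ≤ (s 0 - s 1) * ((M 0 0 * N 0 0 + M 1 0 * N 1 0) - 1) :=
    mul_nonneg (by linarith) (by linarith)
  have t1 : 0 ≤ (s 1 - s 2) * ((M 0 0 * N 0 0 + M 1 0 * N 1 0)
      + (M 0 1 * N 0 1 + M 1 1 * N 1 1)) := mul_nonneg (by linarith) (by linarith)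
  have t2 : 0 ≤ (s 2 + s 3) * ((M 0 0 * N 0 0 + M 1 0 * N 1 0) + (M 0 1 * N 0 1 + M 1 1 * N 1 1)
      + (M 0 2 * N 0 2 + M 1 2 * N 1 2) + (M 0 3 * N 0 3 + M 1 3 * N 1 3)) :=
    mul_nonneg (by linarith) hP3
  have t3 : 0 ≤ (s 2 - s 3) * ((M 0 0 * N 0 0 + M 1 0 * N 1 0) + (M 0 1 * N 0 1 + M 1 1 * N 1 1)
      + (M 0 2 * N 0 2 + M 1 2 * N 1 2) - (M 0 3 * N 0 3 + M 1 3 * N 1 3)) :=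
    mul_nonneg (by linarith) hQ3
  linarith [t0, t1, t2, t3]

lemma lor_of_po {L : Matrix (Fin 4) (Fin 4) ℝ} (h : LorentzPO L) : Lor L := ⟨h.1, h.2.2⟩

lemma det_eta : η.det = -1 := by
  simp [η, Matrix.det_diagonal, Fin.prod_univ_four]

lemma po_mul {M N : Matrix (Fin 4) (Fin 4) ℝ} (hM : LorentzPO M) (hN : LorentzPO N) :
    LorentzPO (M * N) := by
  have h := lor_mul (lor_of_po hM) (lor_of_po hN)
  refine ⟨h.1, ?_, h.2⟩
  rw [Matrix.det_mul, hM.2.1, hN.2.1, one_mul]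

lemma eta_tr_eta {A : Matrix (Fin 4) (Fin 4) ℝ} : (η * Aᵀ * η)ᵀ = η * A * η := by
  rw [Matrix.transpose_mul, Matrix.transpose_mul, Matrix.transpose_transpose, eta_symm]
  noncomm_ring

lemma po_inv {A : Matrix (Fin 4) (Fin 4) ℝ} (hA : LorentzPO A) : LorentzPO (η * Aᵀ * η) := by
  refine ⟨?_, ?_, ?_⟩
  · rw [eta_tr_eta]
    calc η * A * η * η * (η * Aᵀ * η)
        = η * A * ((η * η) * η) * Aᵀ * η := by noncomm_ring
    _ = η * A * (1 * η) * Aᵀ * η := by rw [eta_sq]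
    _ = η * (A * η * Aᵀ) * η := by noncomm_ring
    _ = η * η * η := by rw [lor_flip hA.1]
    _ = 1 * η := by rw [eta_sq]
    _ = η := one_mul η
  · rw [Matrix.det_mul, Matrix.det_mul, det_eta, Matrix.det_transpose, hA.2.1]
    norm_num
  · have : (η * Aᵀ * η) 0 0 = A 0 0 := by
      simp [η, Matrix.mul_apply, Matrix.diagonal_apply, Fin.sum_univ_four]
    rw [this]; exact hA.2.2

def Fm : Matrix (Fin 4) (Fin 4) ℝ := Matrix.diagonal ![1, -1, -1, 1]

lemma po_Fm : LorentzPO Fm := by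
  refine ⟨diag_lor _ (by intro k; fin_cases k <;> norm_num), ?_, ?_⟩
  · simp [Fm, Matrix.det_diagonal, Fin.prod_univ_four]
  · simp [Fm, Matrix.diagonal_apply]

lemma inv_left {A : Matrix (Fin 4) (Fin 4) ℝ} (hA : LorentzPO A) : η * Aᵀ * η * A = 1 := by
  calc η * Aᵀ * η * A = η * (Aᵀ * η * A) := by noncomm_ring
  _ = η * η := by rw [hA.1]
  _ = 1 := eta_sq

lemma inv_right {B : Matrix (Fin 4) (Fin 4) ℝ} (hB : LorentzPO B) : Bᵀ * (η * B * η) = 1 := by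
  calc Bᵀ * (η * B * η) = (Bᵀ * η * B) * η := by noncomm_ring
  _ = η * η := by rw [hB.1]
  _ = 1 := eta_sq

lemma tr_formula (M N : Matrix (Fin 4) (Fin 4) ℝ) (s : Fin 4 → ℝ) :
    (M * Matrix.diagonal s * Nᵀ * Matrix.diagonal ![(1:ℝ),1,0,0]).trace
    = s 0 * (M 0 0 * N 0 0 + M 1 0 * N 1 0)
      + s 1 * (M 0 1 * N 0 1 + M 1 1 * N 1 1)
      + s 2 * (M 0 2 * N 0 2 + M 1 2 * N 1 2)
      + s 3 * (M 0 3 * N 0 3 + M 1 3 * N 1 3) := by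
  simp [Matrix.trace, Matrix.diag, Matrix.mul_apply, Matrix.transpose_apply,
    Matrix.mul_diagonal, Matrix.diagonal_apply, Fin.sum_univ_four]
  ring

theorem lsv_variational_s0_sub_s1 (R : Matrix (Fin 4) (Fin 4) ℝ) (s : Fin 4 → ℝ)
    (h : HasLSV R s) :
    IsLeast {x : ℝ | ∃ L1 L2 : Matrix (Fin 4) (Fin 4) ℝ,
        LorentzPO L1 ∧ LorentzPO L2 ∧
        x = (L1 * R * L2ᵀ * Matrix.diagonal ![1, 1, 0, 0]).trace}
      (s 0 - s 1) := by
  obtain ⟨h01, h12, h23, A, B, hA, hB, hR⟩ := h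
  constructor
  · refine ⟨η * Aᵀ * η, Fm * (η * Bᵀ * η), po_inv hA, po_mul po_Fm (po_inv hB), ?_⟩
    have hL2T : (Fm * (η * Bᵀ * η))ᵀ = η * B * η * Fm := by
      rw [Matrix.transpose_mul, eta_tr_eta,
        show Fmᵀ = Fm from by rw [Fm, Matrix.diagonal_transpose]]
    rw [hR, hL2T]
    have key : η * Aᵀ * η * (A * Matrix.diagonal s * Bᵀ) * (η * B * η * Fm)
        = Matrix.diagonal s * Fm := by
      calc η * Aᵀ * η * (A * Matrix.diagonal s * Bᵀ) * (η * B * η * Fm)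
          = (η * Aᵀ * η * A) * Matrix.diagonal s * (Bᵀ * (η * B * η)) * Fm := by noncomm_ring
      _ = 1 * Matrix.diagonal s * 1 * Fm := by rw [inv_left hA, inv_right hB]
      _ = Matrix.diagonal s * Fm := by rw [one_mul, mul_one]
    rw [key]
    simp [Fm, Matrix.diagonal_mul_diagonal, Matrix.trace_diagonal, Fin.sum_univ_four]
    ring
  · rintro x ⟨L1, L2, h1, h2, rfl⟩
    rw [hR]
    have key : L1 * (A * Matrix.diagonal s * Bᵀ) * L2ᵀ
        = (L1 * A) * Matrix.diagonal s * (L2 * B)ᵀ := by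
      rw [Matrix.transpose_mul]; noncomm_ring
    rw [key, tr_formula]
    exact main_ineq (lor_mul (lor_of_po h1) (lor_of_po hA))
      (lor_mul (lor_of_po h2) (lor_of_po hB)) s h01 h12 h23
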